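/- Let X be a metric space, F : X → 𝒫(X) an upper semicontinuous multivalued map with compact values, N ⊆ X compact, and let P = (P₁,P₂), Q = (Q₁,Q₂) be weak index pairs in N with P₁ ⊆ Q₁ and P₂ ⊆ Q₂. Define Gᵢ(P,Q) := Pᵢ ∪ (F(Qᵢ) ∩ N) for i = 1,2. If P₁ = Q₁ or P₂ = Q₂, then: (i) Pᵢ = Qᵢ implies Gᵢ(P,Q) = Pᵢ = Qᵢ for i = 1,2; (ii) Pᵢ ⊆ Gᵢ(P,Q) ⊆ Qᵢ for i = 1,2; (iii) G(P,Q) := (G₁(P,Q), G₂(P,Q)) is a weak index pair in N; (iv) F(Qᵢ) ∩ N ⊆ Gᵢ(P,Q) for i = 1,2. -/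
import Mathlib


open Set Topology

/-- The image of a set under a multivalued map. -/
def MVImage {Y : Type*} (F : Y → Set Y) (A : Set Y) : Set Y :=
  ⋃ y ∈ A, F y

/-- Upper semicontinuity of a multivalued map: the large counter image of every
closed set is closed. -/
def IsUSC {Y : Type*} [TopologicalSpace Y] (F : Y → Set Y) : Prop :=
  ∀ B : Set Y, IsClosed B → IsClosed {y | (F y ∩ B).Nonempty}

/-- The invariant part of `N` with respect to `F`: points admitting a full
solution (in `N`) through them. -/
def InvPart {Y : Type*} (F : Y → Set Y) (N : Set Y) : Set Y :=
  {y | ∃ σ : ℤ → Y, (∀ n : ℤ, σ n ∈ N) ∧ σ 0 = y ∧ ∀ n : ℤ, σ (n + 1) ∈ F (σ n)}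

/-- The `F`-boundary of a set `A`: `cl A ∩ cl (F(A) \ A)`. -/
def FBoundary {Y : Type*} [TopologicalSpace Y] (F : Y → Set Y) (A : Set Y) : Set Y :=
  closure A ∩ closure (MVImage F A \ A)

/-- `(P₁, P₂)` is a weak index pair for `F` in `N`. -/
structure IsWeakIndexPair {Y : Type*} [TopologicalSpace Y] (F : Y → Set Y)
    (N P₁ P₂ : Set Y) : Prop where
  compact₁ : IsCompact P₁
  compact₂ : IsCompact P₂
  subset₂₁ : P₂ ⊆ P₁
  subset₁N : P₁ ⊆ N
  mapsInto₁ : MVImage F P₁ ∩ N ⊆ P₁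
  mapsInto₂ : MVImage F P₂ ∩ N ⊆ P₂
  fBoundary_subset : FBoundary F P₁ ⊆ P₂
  inv_subset : InvPart F N ⊆ interior (P₁ \ P₂)
  diff_subset : P₁ \ P₂ ⊆ interior N

lemma mvImage_mono {Y : Type*} (F : Y → Set Y) {A B : Set Y} (h : A ⊆ B) :
    MVImage F A ⊆ MVImage F B :=
  biUnion_subset_biUnion_left h

lemma mvImage_isClosed {X : Type*} [MetricSpace X] (F : X → Set X) (hF : IsUSC F)
    (hFc : ∀ x, IsCompact (F x)) {K : Set X} (hK : IsCompact K) :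
    IsClosed (MVImage F K) := by
  rw [← closure_subset_iff_isClosed]
  intro x hx
  set t : ℕ → Set X := fun n => K ∩ {y | (F y ∩ Metric.closedBall x (1 / (n + 1))).Nonempty}
    with ht
  have htcl : ∀ n, IsClosed (t n) := fun n =>
    (hK.isClosed).inter (hF _ Metric.isClosed_closedBall)
  have htn : ∀ n, (t n).Nonempty := by
    intro n
    have hpos : (0 : ℝ) < 1 / (n + 1) := by positivity
    rcases Metric.mem_closure_iff.1 hx _ hpos with ⟨z, hz, hdz⟩
    rcases mem_iUnion₂.1 hz with ⟨y, hyK, hzy⟩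
    exact ⟨y, hyK, z, hzy, Metric.mem_closedBall.2 (by rw [dist_comm]; exact hdz.le)⟩
  have htd : ∀ n, t (n + 1) ⊆ t n := by
    intro n
    apply inter_subset_inter_right
    intro y ⟨z, hz1, hz2⟩
    refine ⟨z, hz1, Metric.closedBall_subset_closedBall ?_ hz2⟩
    have h1 : (0:ℝ) < (n:ℝ) + 1 := by positivity
    apply one_div_le_one_div_of_le h1
    push_cast; linarith
  have := IsCompact.nonempty_iInter_of_sequence_nonempty_isCompact_isClosed t htd htn
    (hK.of_isClosed_subset (htcl 0) inter_subset_left) htcl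
  rcases this with ⟨y, hy⟩
  have hyK : y ∈ K := (mem_iInter.1 hy 0).1
  have hxy : x ∈ F y := by
    rw [← (hFc y).isClosed.closure_eq]
    refine Metric.mem_closure_iff.2 fun ε hε => ?_
    rcases exists_nat_one_div_lt hε with ⟨n, hn⟩
    rcases (mem_iInter.1 hy n).2 with ⟨z, hz1, hz2⟩
    have hd : dist z x ≤ 1 / ((n:ℝ) + 1) := Metric.mem_closedBall.1 hz2
    rw [dist_comm] at hd
    exact ⟨z, hz1, lt_of_le_of_lt hd hn⟩
  exact mem_iUnion₂.2 ⟨y, hyK, hxy⟩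

/-- Properties of the pair `G(P,Q)` with `Gᵢ(P,Q) := Pᵢ ∪ (F(Qᵢ) ∩ N)` for weak
index pairs `P ⊆ Q` in `N` with `P₁ = Q₁` or `P₂ = Q₂`. -/
theorem gPair_properties {X : Type*} [MetricSpace X]
    (F : X → Set X) (hF : IsUSC F) (hFc : ∀ x, IsCompact (F x))
    (N : Set X) (hN : IsCompact N)
    (P₁ P₂ Q₁ Q₂ : Set X)
    (hP : IsWeakIndexPair F N P₁ P₂) (hQ : IsWeakIndexPair F N Q₁ Q₂)
    (h₁ : P₁ ⊆ Q₁) (h₂ : P₂ ⊆ Q₂) (heq : P₁ = Q₁ ∨ P₂ = Q₂) :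
    ((P₁ = Q₁ → P₁ ∪ (MVImage F Q₁ ∩ N) = P₁) ∧
      (P₂ = Q₂ → P₂ ∪ (MVImage F Q₂ ∩ N) = P₂)) ∧
    (P₁ ⊆ P₁ ∪ (MVImage F Q₁ ∩ N) ∧ P₁ ∪ (MVImage F Q₁ ∩ N) ⊆ Q₁ ∧
      P₂ ⊆ P₂ ∪ (MVImage F Q₂ ∩ N) ∧ P₂ ∪ (MVImage F Q₂ ∩ N) ⊆ Q₂) ∧
    IsWeakIndexPair F N (P₁ ∪ (MVImage F Q₁ ∩ N)) (P₂ ∪ (MVImage F Q₂ ∩ N)) ∧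
    (MVImage F Q₁ ∩ N ⊆ P₁ ∪ (MVImage F Q₁ ∩ N) ∧
      MVImage F Q₂ ∩ N ⊆ P₂ ∪ (MVImage F Q₂ ∩ N)) := by
  set G₁ := P₁ ∪ (MVImage F Q₁ ∩ N) with hG₁def
  set G₂ := P₂ ∪ (MVImage F Q₂ ∩ N) with hG₂def
  have hG₁Q : G₁ ⊆ Q₁ := union_subset h₁ hQ.mapsInto₁
  have hG₂Q : G₂ ⊆ Q₂ := union_subset h₂ hQ.mapsInto₂
  have hPG₁ : P₁ ⊆ G₁ := subset_union_left
  have hPG₂ : P₂ ⊆ G₂ := subset_union_left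
  have hi₁ : P₁ = Q₁ → G₁ = P₁ := fun h => subset_antisymm (h ▸ hG₁Q) hPG₁
  have hi₂ : P₂ = Q₂ → G₂ = P₂ := fun h => subset_antisymm (h ▸ hG₂Q) hPG₂
  have hC₁ : IsCompact (MVImage F Q₁ ∩ N) :=
    hN.of_isClosed_subset
      ((mvImage_isClosed F hF hFc hQ.compact₁).inter hN.isClosed) inter_subset_right
  have hC₂ : IsCompact (MVImage F Q₂ ∩ N) :=
    hN.of_isClosed_subset
      ((mvImage_isClosed F hF hFc hQ.compact₂).inter hN.isClosed) inter_subset_right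
  have hG₁c : IsCompact G₁ := hP.compact₁.union hC₁
  have hG₂c : IsCompact G₂ := hP.compact₂.union hC₂
  refine ⟨⟨hi₁, hi₂⟩, ⟨hPG₁, hG₁Q, hPG₂, hG₂Q⟩, ?_, subset_union_right, subset_union_right⟩
  refine ⟨hG₁c, hG₂c, ?_, union_subset hP.subset₁N inter_subset_right, ?_, ?_, ?_, ?_, ?_⟩
  · exact union_subset_union hP.subset₂₁
      (inter_subset_inter_left _ (mvImage_mono F hQ.subset₂₁))
  · exact fun x hx => subset_union_right
      ⟨(mvImage_mono F hG₁Q) hx.1, hx.2⟩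
  · exact fun x hx => subset_union_right
      ⟨(mvImage_mono F hG₂Q) hx.1, hx.2⟩
  · -- fBoundary
    rcases heq with h | h
    · rw [hi₁ h]
      exact hP.fBoundary_subset.trans hPG₂
    · have hG₂ : G₂ = Q₂ := subset_antisymm hG₂Q (h ▸ hPG₂)
      rw [hG₂]
      rintro x ⟨hx1, hx2⟩
      have hxG₁ : x ∈ G₁ := by rwa [hG₁c.isClosed.closure_eq] at hx1
      have hsub : MVImage F G₁ \ G₁ ⊆ Nᶜ := by
        rintro z ⟨hz1, hz2⟩ hzN
        exact hz2 (subset_union_right ⟨mvImage_mono F hG₁Q hz1, hzN⟩)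
      have hxN : x ∉ interior N := by
        have := (closure_mono hsub) hx2
        rwa [closure_compl, mem_compl_iff] at this
      by_contra hxQ₂
      exact hxN (hQ.diff_subset ⟨hG₁Q hxG₁, hxQ₂⟩)
  · -- inv_subset
    rcases heq with h | h
    · refine hQ.inv_subset.trans (interior_mono ?_)
      exact fun x hx => ⟨hPG₁ (h ▸ hx.1), fun hx2 => hx.2 (hG₂Q hx2)⟩
    · refine hP.inv_subset.trans (interior_mono ?_)
      exact fun x hx => ⟨hPG₁ hx.1, fun hx2 => hx.2 (h ▸ hG₂Q hx2)⟩
  · -- diff_subset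
    rcases heq with h | h
    · intro x hx
      have hxP₁ : x ∈ P₁ := by rw [← hi₁ h]; exact hx.1
      exact hP.diff_subset ⟨hxP₁, fun hx2 => hx.2 (hPG₂ hx2)⟩
    · intro x hx
      rcases hx.1 with hxP | hxQ
      · exact hP.diff_subset ⟨hxP, fun hx2 => hx.2 (hPG₂ hx2)⟩
      · refine hQ.diff_subset ⟨hQ.mapsInto₁ hxQ, fun hx2 => hx.2 ?_⟩
        rw [← h] at hx2
        exact hPG₂ hx2
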